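/- Let T be a rooted perfect binary tree, u the parent of a vertex v ≠ root, and t ≥ 0. The following are equivalent: (1) v is weakly t-stable; (2) v is 0-stable for the initial vector that agrees with ξ_t on the subtree T_v and assigns opinion ξ_t(v) to all vertices outside T_v; (3) for every odd k > 0 and every process ξ̂ with ξ̂_0 agreeing with ξ_t on T_v and satisfying ξ̂_j(u) = ξ̂_0(v) for every odd j ≤ k, one has ξ̂_{k+1}(v) = ξ̂_0(v). -/

import Mathlib

/-!
Let `c = ξ_t(v)` and let `τ` be `ξ_t` on `T_v` and `c` elsewhere. The only edge leaving `T_v`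
is `uv`, and `u` has two of its three neighbours outside `T_v`, so the `τ`-process stays `c`
outside `T_v` forever. Majority dynamics is monotone, and a witness of weak stability holds
opinion `c` at `v` at even times; comparing it with `τ`, which is more `c`-inclined, gives
(1) ⇒ (2), while `τ` itself witnesses (2) ⇒ (1). Inside `T_v` the process sees the rest of the
tree only through `u`, and since trees are bipartite, `v` at even times depends on `u` only at
odd times; hence every process as in (3) agrees at `v` at time `k + 1` with the `τ`-process,
which gives (2) ⇒ (3), and (3) applied to `τ` itself gives (2).
-/

open SimpleGraph Set

variable {V : Type*}

/-- The majority-dynamics process generated by the initial opinion vector `σ`: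
`ξ (t+1) v` is the sign of the sum of the opinions `ξ t` over the neighbours of `v`. -/
noncomputable def dyn (G : SimpleGraph V) (σ : V → ℤ) : ℕ → V → ℤ
  | 0 => σ
  | t + 1 => fun v => if 0 < ∑ᶠ u ∈ G.neighborSet v, dyn G σ t u then 1 else -1

/-- `σ` is a valid vector of opinions, i.e. takes values in `{-1, 1}`. -/
def PM (σ : V → ℤ) : Prop := ∀ v, σ v = 1 ∨ σ v = -1

/-- The degree of a vertex. -/
noncomputable def degree' (G : SimpleGraph V) (v : V) : ℕ := (G.neighborSet v).ncard

/-- A leaf is a vertex of degree 1. -/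
def IsLeaf (G : SimpleGraph V) (v : V) : Prop := degree' G v = 1

/-- The number of neighbours of `v` that are leaves. -/
noncomputable def leafNbrs (G : SimpleGraph V) (v : V) : ℕ := {u | G.Adj v u ∧ IsLeaf G u}.ncard

/-- All degrees of `G` are odd. -/
def OddDegrees (G : SimpleGraph V) : Prop := ∀ v, Odd (degree' G v)

/-- `v` is `t`-stable for the process `ξ`. -/
def Stable (ξ : ℕ → V → ℤ) (v : V) (t : ℕ) : Prop :=
  ∀ s, t ≤ s → s % 2 = t % 2 → ξ (s + 2) v = ξ s v

/-- `G` is a perfect `k`-ary tree of height `h` rooted at `R`. -/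
noncomputable def IsPerfectKAry (G : SimpleGraph V) (R : V) (k h : ℕ) : Prop :=
  G.IsTree ∧ (∀ v, degree' G v = 1 ∨ degree' G v = k + 1) ∧
    (∀ v, degree' G v = 1 → G.dist R v = h) ∧ degree' G R = k + 1

/-- The set of descendants of `v` (including `v`) in the tree rooted at `R`:
those vertices `u` such that `v` lies on the (unique) geodesic from `R` to `u`. -/
noncomputable def desc (G : SimpleGraph V) (R v : V) : Set V :=
  {u | G.dist R u = G.dist R v + G.dist v u}

/-- `p` is the parent of `c` in the tree rooted at `R`. -/
noncomputable def IsParent (G : SimpleGraph V) (R p c : V) : Prop :=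
  G.Adj p c ∧ G.dist R p + 1 = G.dist R c

/-- `v` is weakly `t`-stable for the process `ξ` (in the tree rooted at `R`): there is a
vector of initial opinions agreeing with `ξ t` on the subtree of descendants of `v` for
which `v` is 0-stable. -/
noncomputable def WeaklyStable (G : SimpleGraph V) (R : V) (ξ : ℕ → V → ℤ) (v : V)
    (t : ℕ) : Prop :=
  ∃ σ' : V → ℤ, PM σ' ∧ (∀ w ∈ desc G R v, σ' w = ξ t w) ∧
    ∀ s, s % 2 = 0 → dyn G σ' (s + 2) v = dyn G σ' s v

theorem pm_dyn {σ : V → ℤ} (hσ : PM σ) (G : SimpleGraph V) : ∀ t, PM (dyn G σ t)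
  | 0 => hσ
  | _ + 1 => fun _ => by unfold dyn; split <;> simp

theorem ite_pos_eq_of_pos_mul {c S : ℤ} (hc : c = 1 ∨ c = -1) (h : 0 < c * S) :
    (if 0 < S then 1 else -1 : ℤ) = c := by
  rcases hc with rfl | rfl <;> split_ifs <;> omega

section Dynamics

variable {G : SimpleGraph V}

theorem stable_iff_dyn_even_eq {σ : V → ℤ} {v : V} :
    (∀ s, s % 2 = 0 → dyn G σ (s + 2) v = dyn G σ s v) ↔
      ∀ s, s % 2 = 0 → dyn G σ s v = σ v := by
  refine ⟨fun hst s hs => ?_, fun h s hs => by rw [h s hs, h (s + 2) (by omega)]⟩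
  obtain ⟨m, rfl⟩ : ∃ m, s = 2 * m := ⟨s / 2, by omega⟩
  induction m with
  | zero => rfl
  | succ m ih => rw [Nat.mul_succ, hst _ (by omega), ih (by omega)]

theorem stable_of_dyn_odd_succ_eq {σ : V → ℤ} {v : V}
    (h : ∀ k, Odd k → dyn G σ (k + 1) v = σ v) :
    ∀ s, s % 2 = 0 → dyn G σ (s + 2) v = dyn G σ s v := by
  refine stable_iff_dyn_even_eq.mpr fun s hs => ?_
  rcases s with _ | s
  · rfl
  · exact h s (Nat.odd_iff.mpr (by omega))

variable [G.LocallyFinite]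

theorem dyn_succ (σ : V → ℤ) (s : ℕ) (w : V) :
    dyn G σ (s + 1) w = if 0 < ∑ x ∈ G.neighborFinset w, dyn G σ s x then 1 else -1 := by
  simp only [dyn, neighborFinset, finsum_mem_eq_toFinset_sum]
  congr

theorem dyn_mono {σ τ : V → ℤ} (h : σ ≤ τ) (s : ℕ) : dyn G σ s ≤ dyn G τ s := by
  induction s with
  | zero => exact h
  | succ s ih =>
    intro w
    have := Finset.sum_le_sum fun x (_ : x ∈ G.neighborFinset w) => ih x
    simp only [dyn_succ]
    split_ifs <;> omega

/-- For `±1`-vectors, `σ w = c → τ w = c` means `σ ≤ τ` or `τ ≤ σ` according to the sign of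
`c`, so this is monotonicity of the dynamics. -/
theorem dyn_eq_of_dyn_eq {σ τ : V → ℤ} (hσ : PM σ) (hτ : PM τ) {c : ℤ}
    (hc : c = 1 ∨ c = -1)
    (h : ∀ w, σ w = c → τ w = c) (s : ℕ) (w : V) (hw : dyn G σ s w = c) :
    dyn G τ s w = c := by
  have hτs := pm_dyn hτ G s w
  rcases hc with rfl | rfl
  · have hle : σ ≤ τ := fun x => show _ ≤ _ by grind [h x, hσ x, hτ x]
    have : dyn G σ s w ≤ dyn G τ s w := dyn_mono hle s w
    omega
  · have hle : τ ≤ σ := fun x => show _ ≤ _ by grind [h x, hσ x, hτ x]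
    have : dyn G τ s w ≤ dyn G σ s w := dyn_mono hle s w
    omega

end Dynamics

section Tree

variable {G : SimpleGraph V} {R u v : V}

theorem SimpleGraph.Walk.dist_le_length_of_mem_support {a b y : V} (p : G.Walk a b)
    (hy : y ∈ p.support) : G.dist a y ≤ p.length := by
  classical
  exact (dist_le _).trans (p.length_takeUntil_le_length hy)

theorem SimpleGraph.Connected.exists_isParent (hG : G.Connected) {x : V} (hx : x ≠ R) :
    ∃ y, IsParent G R y x := by
  obtain ⟨p, hp⟩ := hG.exists_walk_length_eq_dist x R
  have hnil : ¬p.Nil := fun h => hx h.eq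
  refine ⟨p.snd, (p.adj_snd hnil).symm, ?_⟩
  have htail := dist_le p.tail
  have hlen := p.length_tail_add_one hnil
  have htri := hG.dist_triangle (u := x) (v := p.snd) (w := R)
  have hadj : G.dist x p.snd = 1 := dist_eq_one_iff_adj.mpr (p.adj_snd hnil)
  rw [dist_comm (u := R), dist_comm (u := R)]
  omega

theorem SimpleGraph.IsTree.isParent_unique (hG : G.IsTree) {x w₁ w₂ : V}
    (h₁ : IsParent G R w₁ x) (h₂ : IsParent G R w₂ x) : w₁ = w₂ := by
  have hpath : ∀ w, IsParent G R w x → ∃ q : G.Path R x, q.1.penultimate = w := by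
    intro w hw
    obtain ⟨p, hp, hlen⟩ := hG.connected.exists_path_of_dist R w
    have hx : x ∉ p.support := fun hx => by
      have := p.dist_le_length_of_mem_support hx
      have := hw.2
      omega
    exact ⟨⟨p.concat hw.1, hp.concat hx hw.1⟩, p.penultimate_concat hw.1⟩
  obtain ⟨q₁, rfl⟩ := hpath w₁ h₁
  obtain ⟨q₂, rfl⟩ := hpath w₂ h₂
  rw [(hG.isAcyclic.subsingleton_path R x).elim q₁ q₂]

theorem mem_desc_self (G : SimpleGraph V) (R v : V) : v ∈ desc G R v := by
  simp [desc]

theorem IsParent.notMem_desc (hu : IsParent G R u v) : u ∉ desc G R v := by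
  intro h
  have h' : G.dist R u = G.dist R v + G.dist v u := h
  have := hu.2
  omega

theorem SimpleGraph.IsTree.eq_of_adj_of_mem_desc (hG : G.IsTree) (hu : IsParent G R u v)
    {x w : V} (hx : x ∈ desc G R v) (hw : w ∉ desc G R v) (hxw : G.Adj x w) :
    x = v ∧ w = u := by
  have hx' : G.dist R x = G.dist R v + G.dist v x := hx
  have hw' : G.dist R w ≠ G.dist R v + G.dist v w := hw
  have hRxw := hG.dist_eq_dist_add_one_of_adj R hxw
  have hvxw := hG.dist_eq_dist_add_one_of_adj v hxw
  have hRvw : G.dist R w ≤ G.dist R v + G.dist v w := hG.connected.dist_triangle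
  have hwx : IsParent G R w x := ⟨hxw.symm, by omega⟩
  by_cases hxv : x = v
  · subst hxv
    exact ⟨rfl, hG.isParent_unique hwx hu⟩
  · obtain ⟨y, hy⟩ := hG.connected.exists_isParent hxv
    have hRvy : G.dist R y ≤ G.dist R v + G.dist v y := hG.connected.dist_triangle
    have hRyx := hG.dist_eq_dist_add_one_of_adj R hy.1
    have hyx : IsParent G R y x := ⟨hy.1, by have := hy.2; omega⟩
    obtain rfl := hG.isParent_unique hwx hyx
    exact absurd (by have := hy.2; have := hwx.2; omega) hw'

theorem one_lt_degree_of_isParent [G.LocallyFinite] (hG : G.Connected) (hu : IsParent G R u v)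
    (huR : u ≠ R) : 1 < G.degree u := by
  obtain ⟨y, hy⟩ := hG.exists_isParent huR
  rw [← card_neighborFinset_eq_degree, Finset.one_lt_card]
  refine ⟨y, by simpa using hy.1.symm, v, by simpa using hu.1, ?_⟩
  rintro rfl
  have := hy.2
  have := hu.2
  omega

theorem degree'_eq_degree [G.LocallyFinite] (w : V) : degree' G w = G.degree w := by
  rw [degree', Set.ncard_eq_toFinset_card', ← card_neighborFinset_eq_degree]
  rfl

theorem IsPerfectKAry.three_le_degree_of_isParent [G.LocallyFinite] {h : ℕ}
    (hperf : IsPerfectKAry G R 2 h) (hu : IsParent G R u v) : 3 ≤ G.degree u := by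
  obtain ⟨hT, hdeg, -, hR⟩ := hperf
  rw [← degree'_eq_degree]
  by_cases huR : u = R
  · rw [huR, hR]
  · have := one_lt_degree_of_isParent hT.connected hu huR
    rw [← degree'_eq_degree] at this
    rcases hdeg u with hu1 | hu3 <;> omega

end Tree

section Subtree

variable {G : SimpleGraph V} [G.LocallyFinite] {R u v : V}

/-- Outside `T_v` every vertex has a majority of neighbours outside `T_v`: all of them, or two
of the three neighbours of `u`. -/
theorem dyn_eq_of_notMem_desc (hG : G.IsTree) (hu : IsParent G R u v)
    (hpos : ∀ w ∉ desc G R v, 0 < G.degree w) (hdeg_u : 3 ≤ G.degree u) {σ : V → ℤ}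
    (hσ : PM σ) {c : ℤ} (hc : c = 1 ∨ c = -1) (hout : ∀ w ∉ desc G R v, σ w = c)
    (j : ℕ) :
    ∀ w ∉ desc G R v, dyn G σ j w = c := by
  classical
  induction j with
  | zero => exact hout
  | succ j ih =>
    intro w hw
    have hnbr : ∀ x ∈ G.neighborFinset w, x ≠ v → dyn G σ j x = c := fun x hx hxv =>
      ih x fun hxd =>
        hxv (hG.eq_of_adj_of_mem_desc hu hxd hw ((G.mem_neighborFinset w x).mp hx).symm).1
    rw [dyn_succ]
    apply ite_pos_eq_of_pos_mul hc
    by_cases hvw : v ∈ G.neighborFinset w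
    · obtain rfl : w = u := (hG.eq_of_adj_of_mem_desc hu (mem_desc_self G R v) hw
        ((G.mem_neighborFinset w v).mp hvw).symm).2
      rw [← Finset.add_sum_erase _ _ hvw, Finset.sum_congr rfl fun x hx =>
          hnbr x (Finset.mem_of_mem_erase hx) (Finset.ne_of_mem_erase hx), Finset.sum_const,
        Finset.card_erase_of_mem hvw, card_neighborFinset_eq_degree, nsmul_eq_mul]
      rcases hc with rfl | rfl <;> rcases pm_dyn hσ G j v with h | h <;> rw [h] <;> omega
    · rw [Finset.sum_congr rfl fun x hx => hnbr x hx fun hxv => hvw (hxv ▸ hx), Finset.sum_const,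
        card_neighborFinset_eq_degree, nsmul_eq_mul]
      have := hpos w hw
      rcases hc with rfl | rfl <;> omega

/-- Inside `T_v` the process sees the rest of the tree only through `u`, and since trees are
bipartite, the opinion of `w` at a time `s` with `s + dist v w` even involves `u` only at odd
times. -/
theorem dyn_eq_of_eqOn_desc (hG : G.IsTree) (hu : IsParent G R u v) {σ τ : V → ℤ}
    (hdesc : ∀ w ∈ desc G R v, σ w = τ w) {n : ℕ}
    (hpar : ∀ j < n, j % 2 = 1 → dyn G σ j u = dyn G τ j u) :
    ∀ s ≤ n, ∀ w ∈ desc G R v, (s + G.dist v w) % 2 = 0 →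
      dyn G σ s w = dyn G τ s w := by
  intro s
  induction s with
  | zero => exact fun _ w hw _ => hdesc w hw
  | succ s ih =>
    intro hs w hw hparity
    simp only [dyn_succ]
    congr 2
    refine Finset.sum_congr rfl fun x hx => ?_
    have hwx : G.Adj w x := (G.mem_neighborFinset w x).mp hx
    by_cases hxd : x ∈ desc G R v
    · have := hG.dist_eq_dist_add_one_of_adj v hwx
      exact ih (by omega) x hxd (by omega)
    · obtain ⟨rfl, rfl⟩ := hG.eq_of_adj_of_mem_desc hu hw hxd hwx
      rw [dist_self] at hparity
      exact hpar s (by omega) (by omega)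

theorem stable_of_weaklyStable {ξ : ℕ → V → ℤ} {t : ℕ} {τ : V → ℤ} (hτ : PM τ)
    (hdesc : ∀ w ∈ desc G R v, τ w = ξ t w) (hout : ∀ w ∉ desc G R v, τ w = ξ t v)
    (hws : WeaklyStable G R ξ v t) :
    ∀ s, s % 2 = 0 → dyn G τ (s + 2) v = dyn G τ s v := by
  obtain ⟨σ, hσ, hσd, hst⟩ := hws
  have hσv : σ v = ξ t v := hσd v (mem_desc_self G R v)
  have hτv : τ v = σ v := by rw [hdesc v (mem_desc_self G R v), hσv]
  have hspread : ∀ w, σ w = σ v → τ w = σ v := fun w hw => by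
    by_cases hwd : w ∈ desc G R v
    · rw [hdesc w hwd, ← hσd w hwd, hw]
    · rw [hout w hwd, hσv]
  refine stable_iff_dyn_even_eq.mpr fun s hs => hτv ▸ ?_
  exact dyn_eq_of_dyn_eq hσ hτ (hσ v) hspread s v (stable_iff_dyn_even_eq.mp hst s hs)

theorem dyn_succ_eq_of_stable (hG : G.IsTree) (hu : IsParent G R u v) {τ : V → ℤ}
    (hst : ∀ s, s % 2 = 0 → dyn G τ (s + 2) v = dyn G τ s v)
    (hτu : ∀ j, j % 2 = 1 → dyn G τ j u = τ v) {σ : V → ℤ}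
    (hdesc : ∀ w ∈ desc G R v, σ w = τ w) {k : ℕ} (hk : Odd k)
    (hpar : ∀ j, Odd j → j ≤ k → dyn G σ j u = σ v) : dyn G σ (k + 1) v = σ v := by
  have hv := mem_desc_self G R v
  have hk' := Nat.odd_iff.mp hk
  have hparτ : ∀ j < k + 1, j % 2 = 1 → dyn G σ j u = dyn G τ j u := fun j hj hjo => by
    rw [hpar j (Nat.odd_iff.mpr hjo) (by omega), hτu j hjo, hdesc v hv]
  rw [dyn_eq_of_eqOn_desc hG hu hdesc hparτ (k + 1) le_rfl v hv (by rw [dist_self]; omega),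
    stable_iff_dyn_even_eq.mp hst (k + 1) (by omega), hdesc v hv]

end Subtree

open scoped Classical in
theorem weaklyStable_equiv_general (G : SimpleGraph V) (R : V) (h : ℕ)
    (hperf : IsPerfectKAry G R 2 h) (v u : V) (hu : IsParent G R u v)
    (σ : V → ℤ) (hσ : PM σ) (t : ℕ) :
    (WeaklyStable G R (dyn G σ) v t ↔
      (∀ s, s % 2 = 0 →
        dyn G (fun w => if w ∈ desc G R v then dyn G σ t w else dyn G σ t v) (s + 2) v =
        dyn G (fun w => if w ∈ desc G R v then dyn G σ t w else dyn G σ t v) s v)) ∧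
    (WeaklyStable G R (dyn G σ) v t ↔
      (∀ k : ℕ, Odd k → ∀ σ' : V → ℤ, PM σ' →
        (∀ w ∈ desc G R v, σ' w = dyn G σ t w) →
        (∀ j, Odd j → j ≤ k → dyn G σ' j u = σ' v) →
        dyn G σ' (k + 1) v = σ' v)) := by
  have hpos : ∀ w, 0 < degree' G w := fun w => by rcases hperf.2.1 w with hw | hw <;> omega
  let _ : G.LocallyFinite := fun w => (Set.finite_of_ncard_pos (hpos w)).fintype
  set τ : V → ℤ := fun w => if w ∈ desc G R v then dyn G σ t w else dyn G σ t v
  have hτ : PM τ := fun w => by dsimp only [τ]; split <;> exact pm_dyn hσ G t _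
  have hτd : ∀ w ∈ desc G R v, τ w = dyn G σ t w := fun w hw => if_pos hw
  have hτo : ∀ w ∉ desc G R v, τ w = dyn G σ t v := fun w hw => if_neg hw
  have hτu : ∀ j, dyn G τ j u = τ v := fun j => by
    rw [dyn_eq_of_notMem_desc hperf.1 hu (fun w _ => degree'_eq_degree (G := G) w ▸ hpos w)
      (hperf.three_le_degree_of_isParent hu) hτ (pm_dyn hσ G t v) hτo j u hu.notMem_desc, hτd v (mem_desc_self G R v)]
  have h12 := stable_of_weaklyStable hτ hτd hτo
  refine ⟨⟨h12, fun h2 => ⟨τ, hτ, hτd, h2⟩⟩, ⟨fun h1 k hk σ' _ hd => ?_, fun h3 => ?_⟩⟩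
  · exact dyn_succ_eq_of_stable hperf.1 hu (h12 h1) (fun j _ => hτu j)
      (fun w hw => (hd w hw).trans (hτd w hw).symm) hk
  · exact ⟨τ, hτ, hτd,
      stable_of_dyn_odd_succ_eq fun k hk => h3 k hk τ hτ hτd fun j _ _ => hτu j⟩

open scoped Classical in
/-- Equivalent characterisations of weak `t`-stability of a non-root vertex
`v` with parent `u` of a perfect binary tree: (1) the definition; (2) `v` is 0-stable for
the particular initial vector agreeing with `ξ_t` on `T_v` and equal to `ξ_t(v)` outside;
(3) for every odd `k > 0` and every process starting from a vector agreeing with `ξ_t` on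
`T_v` in which the parent `u` has opinion `ξ̂_0(v)` at all odd times `j ≤ k`, one has
`ξ̂_{k+1}(v) = ξ̂_0(v)`. -/
theorem weaklyStable_equiv [Fintype V] (G : SimpleGraph V) (R : V) (h : ℕ) (hh : 1 ≤ h)
    (hperf : IsPerfectKAry G R 2 h) (v u : V) (hv : v ≠ R) (hu : IsParent G R u v)
    (σ : V → ℤ) (hσ : PM σ) (t : ℕ) :
    (WeaklyStable G R (dyn G σ) v t ↔
      (∀ s, s % 2 = 0 →
        dyn G (fun w => if w ∈ desc G R v then dyn G σ t w else dyn G σ t v) (s + 2) v =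
        dyn G (fun w => if w ∈ desc G R v then dyn G σ t w else dyn G σ t v) s v)) ∧
    (WeaklyStable G R (dyn G σ) v t ↔
      (∀ k : ℕ, Odd k → ∀ σ' : V → ℤ, PM σ' →
        (∀ w ∈ desc G R v, σ' w = dyn G σ t w) →
        (∀ j, Odd j → j ≤ k → dyn G σ' j u = σ' v) →
        dyn G σ' (k + 1) v = σ' v)) :=
  weaklyStable_equiv_general G R h hperf v u hu σ hσ t
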